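/- arXiv:1507.00855 — 3 statements merged into one kernel-verified Lean document; each statement's English description precedes it below -/
import Mathlib

section
/- Let G = ∏_{ℓ≥1} O_K/𝔟_ℓ with product (Haar) probability measure ℙ, where the 𝔟_ℓ are pairwise coprime proper nonzero ideals with finite quotients. For a finite set A ⊆ O_K, let C_A := {x ∈ {0,1}^{O_K} : x(a) = 1 for all a ∈ A} and ν_η := φ_*(ℙ) the pushforward of ℙ under φ. Then ν_η(C_A) = ∏_{ℓ≥1} (1 − D(𝔟_ℓ|A)/N(𝔟_ℓ)). -/
set_option synthInstance.maxHeartbeats 1000000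
set_option maxHeartbeats 1000000

open scoped Classical ENNReal
open NumberField MeasureTheory Filter

noncomputable instance quotMeasurableSpace {K : Type*} [Field K] [NumberField K]
    (I : Ideal (𝓞 K)) : MeasurableSpace (𝓞 K ⧸ I) := ⊤

/-- The coding map `φ : G → {0,1}^{𝓞 K}`, `φ(g)(b) = 1` iff `g_ℓ + b ≢ 0 mod 𝔟_ℓ` for all `ℓ`. -/
noncomputable def phi {K : Type*} [Field K] [NumberField K] (𝔟 : ℕ → Ideal (𝓞 K))
    (g : ∀ ℓ, 𝓞 K ⧸ 𝔟 ℓ) : 𝓞 K → ℕ :=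
  fun b => if ∀ ℓ, g ℓ + Ideal.Quotient.mk (𝔟 ℓ) b ≠ 0 then 1 else 0

section Aux

variable {K : Type*} [Field K] [NumberField K] (𝔟 : ℕ → Ideal (𝓞 K))
  [∀ ℓ, Finite (𝓞 K ⧸ 𝔟 ℓ)]

lemma meas_aux (s : Finset ℕ) (P : ∀ ℓ, (𝓞 K ⧸ 𝔟 ℓ) → Prop) :
    MeasurableSet {g : ∀ ℓ, 𝓞 K ⧸ 𝔟 ℓ | ∀ ℓ ∈ s, P ℓ (g ℓ)} := by
  have h : {g : ∀ ℓ, 𝓞 K ⧸ 𝔟 ℓ | ∀ ℓ ∈ s, P ℓ (g ℓ)}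
      = ⋂ ℓ ∈ s, (fun g : ∀ ℓ, 𝓞 K ⧸ 𝔟 ℓ => g ℓ) ⁻¹' {x | P ℓ x} := by
    ext g; simp
  rw [h]
  exact MeasurableSet.biInter s.countable_toSet fun ℓ _ =>
    (measurable_pi_apply ℓ) MeasurableSpace.measurableSet_top

lemma key (ℙ : Measure (∀ ℓ, 𝓞 K ⧸ 𝔟 ℓ))
    (hℙ : ∀ (s : Finset ℕ) (v : ∀ ℓ, 𝓞 K ⧸ 𝔟 ℓ),
      ℙ {g | ∀ ℓ ∈ s, g ℓ = v ℓ} = ∏ ℓ ∈ s, ((Nat.card (𝓞 K ⧸ 𝔟 ℓ) : ℝ≥0∞))⁻¹)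
    (s : Finset ℕ) (T : ∀ ℓ, Finset (𝓞 K ⧸ 𝔟 ℓ)) :
    ℙ {g | ∀ ℓ ∈ s, g ℓ ∈ T ℓ}
      = ∏ ℓ ∈ s, (((T ℓ).card : ℝ≥0∞) * ((Nat.card (𝓞 K ⧸ 𝔟 ℓ) : ℝ≥0∞))⁻¹) := by
  classical
  haveI : ∀ ℓ, Fintype (𝓞 K ⧸ 𝔟 ℓ) := fun ℓ => Fintype.ofFinite _
  set ex : (∀ ℓ : s, 𝓞 K ⧸ 𝔟 ℓ) → ∀ ℓ, 𝓞 K ⧸ 𝔟 ℓ :=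
    fun v ℓ => if h : ℓ ∈ s then v ⟨ℓ, h⟩ else 0 with hex
  have hset : {g : ∀ ℓ, 𝓞 K ⧸ 𝔟 ℓ | ∀ ℓ ∈ s, g ℓ ∈ T ℓ}
      = ⋃ v ∈ Fintype.piFinset (fun ℓ : s => T (ℓ : ℕ)),
          {g | ∀ ℓ ∈ s, g ℓ = ex v ℓ} := by
    ext g
    simp only [Set.mem_setOf_eq, Set.mem_iUnion, Fintype.mem_piFinset, exists_prop]
    constructor
    · intro hg
      refine ⟨fun ℓ => g ℓ, fun ℓ => hg ℓ ℓ.2, fun ℓ hℓ => ?_⟩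
      simp [hex, hℓ]
    · rintro ⟨v, hv, hgv⟩ ℓ hℓ
      rw [hgv ℓ hℓ]
      simpa [hex, hℓ] using hv ⟨ℓ, hℓ⟩
  have hdisj : Set.PairwiseDisjoint (↑(Fintype.piFinset (fun ℓ : s => T (ℓ : ℕ))))
      (fun v => {g : ∀ ℓ, 𝓞 K ⧸ 𝔟 ℓ | ∀ ℓ ∈ s, g ℓ = ex v ℓ}) := by
    intro v _ w _ hvw
    refine Set.disjoint_left.2 fun g hg1 hg2 => hvw ?_
    funext ℓ
    have h1 := hg1 ℓ.1 ℓ.2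
    have h2 := hg2 ℓ.1 ℓ.2
    have e1 : ex v ℓ.1 = v ℓ := by simp [hex, ℓ.2]
    have e2 : ex w ℓ.1 = w ℓ := by simp [hex, ℓ.2]
    rw [h1, e1] at h2
    rw [e2] at h2
    exact h2
  rw [hset, measure_biUnion_finset hdisj
    (fun v _ => meas_aux 𝔟 s (fun ℓ x => x = ex v ℓ))]
  rw [Finset.sum_congr rfl (fun v _ => hℙ s (ex v)), Finset.sum_const,
    Fintype.card_piFinset, nsmul_eq_mul, Nat.cast_prod,
    Finset.prod_coe_sort s (fun ℓ => ((T ℓ).card : ℝ≥0∞)),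
    ← Finset.prod_mul_distrib]

end Aux

/-- the Mirsky measure of the cylinder `C_A = {x : x|_A ≡ 1}` equals
`∏_ℓ (1 − D(𝔟_ℓ|A)/N(𝔟_ℓ))`, the infinite product being the limit of partial products.
Here `ℙ` is the product of the uniform probability measures on the finite groups
`𝓞 K ⧸ 𝔟 ℓ`, characterized by its values on cylinders. -/
theorem stmt9 {K : Type*} [Field K] [NumberField K] (𝔟 : ℕ → Ideal (𝓞 K))
    [∀ ℓ, Finite (𝓞 K ⧸ 𝔟 ℓ)]
    (hprop : ∀ ℓ, 𝔟 ℓ ≠ ⊤) (hbot : ∀ ℓ, 𝔟 ℓ ≠ ⊥)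
    (hcop : ∀ i j, i ≠ j → 𝔟 i ⊔ 𝔟 j = ⊤)
    (ℙ : Measure (∀ ℓ, 𝓞 K ⧸ 𝔟 ℓ)) [IsProbabilityMeasure ℙ]
    (hℙ : ∀ (s : Finset ℕ) (v : ∀ ℓ, 𝓞 K ⧸ 𝔟 ℓ),
      ℙ {g | ∀ ℓ ∈ s, g ℓ = v ℓ} = ∏ ℓ ∈ s, ((Nat.card (𝓞 K ⧸ 𝔟 ℓ) : ℝ≥0∞))⁻¹)
    (A : Finset (𝓞 K)) :
    Tendsto (fun L => ∏ ℓ ∈ Finset.range L,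
        (1 - (Set.ncard ((Ideal.Quotient.mk (𝔟 ℓ)) '' (↑A : Set (𝓞 K))) : ℝ)
          / (Nat.card (𝓞 K ⧸ 𝔟 ℓ) : ℝ)))
      atTop
      (nhds ((ℙ (phi 𝔟 ⁻¹' {x : 𝓞 K → ℕ | ∀ a ∈ A, x a = 1})).toReal)) := by
  classical
  haveI : ∀ ℓ, Fintype (𝓞 K ⧸ 𝔟 ℓ) := fun ℓ => Fintype.ofFinite _
  set B : ∀ ℓ, Finset (𝓞 K ⧸ 𝔟 ℓ) :=
    fun ℓ => A.image (fun a => -(Ideal.Quotient.mk (𝔟 ℓ) a)) with hB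
  set E : ℕ → Set (∀ ℓ, 𝓞 K ⧸ 𝔟 ℓ) :=
    fun L => {g | ∀ ℓ ∈ Finset.range L, g ℓ ∈ (B ℓ)ᶜ} with hE
  have hmem : ∀ ℓ (x : 𝓞 K ⧸ 𝔟 ℓ),
      x ∈ (B ℓ)ᶜ ↔ ∀ a ∈ A, x + Ideal.Quotient.mk (𝔟 ℓ) a ≠ 0 := by
    intro ℓ x
    simp only [hB, Finset.mem_compl, Finset.mem_image, not_exists, not_and]
    constructor
    · intro h a ha hx
      exact h a ha (by linear_combination -hx)
    · intro h a ha hx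
      exact h a ha (by linear_combination -hx)
  have hSet : phi 𝔟 ⁻¹' {x : 𝓞 K → ℕ | ∀ a ∈ A, x a = 1} = ⋂ L, E L := by
    ext g
    simp only [Set.mem_preimage, Set.mem_setOf_eq, phi, Set.mem_iInter, hE]
    constructor
    · intro h L ℓ _
      rw [hmem]
      intro a ha
      have hi := h a ha
      by_cases hc : ∀ ℓ', g ℓ' + Ideal.Quotient.mk (𝔟 ℓ') a ≠ 0
      · exact hc ℓ
      · rw [if_neg hc] at hi; exact absurd hi zero_ne_one
    · intro h a ha
      have hc : ∀ ℓ, g ℓ + Ideal.Quotient.mk (𝔟 ℓ) a ≠ 0 := fun ℓ =>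
        (hmem ℓ (g ℓ)).1 (h (ℓ + 1) ℓ (Finset.mem_range.2 (Nat.lt_succ_self ℓ))) a ha
      exact if_pos hc
  have hanti : Antitone E := by
    intro L1 L2 hle g hg ℓ hℓ
    exact hg ℓ (Finset.mem_range.2 (lt_of_lt_of_le (Finset.mem_range.1 hℓ) hle))
  have htend := tendsto_measure_iInter_atTop
    (fun L => (meas_aux 𝔟 (Finset.range L) (fun ℓ x => x ∈ (B ℓ)ᶜ)).nullMeasurableSet) hanti
    ⟨0, measure_ne_top ℙ _⟩
  rw [← hSet] at htend
  have htr := (ENNReal.tendsto_toReal (measure_ne_top ℙ _)).comp htend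
  refine htr.congr fun L => ?_
  have hkey := key 𝔟 ℙ hℙ (Finset.range L) (fun ℓ => (B ℓ)ᶜ)
  have hEL : ℙ (E L) = ∏ ℓ ∈ Finset.range L,
      ((((B ℓ)ᶜ.card : ℝ≥0∞)) * ((Nat.card (𝓞 K ⧸ 𝔟 ℓ) : ℝ≥0∞))⁻¹) := hkey
  show (ℙ (E L)).toReal = _
  rw [hEL, ENNReal.toReal_prod]
  refine Finset.prod_congr rfl fun ℓ _ => ?_
  have hN0 : 0 < Nat.card (𝓞 K ⧸ 𝔟 ℓ) := Nat.card_pos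
  have hD : Set.ncard ((Ideal.Quotient.mk (𝔟 ℓ)) '' (↑A : Set (𝓞 K)))
      = (B ℓ).card := by
    have h1 : (B ℓ) = (A.image (Ideal.Quotient.mk (𝔟 ℓ))).image Neg.neg := by
      rw [hB, Finset.image_image]; rfl
    rw [h1, Finset.card_image_of_injective _ neg_injective,
      ← Finset.coe_image, Set.ncard_coe_finset]
  have hle : (B ℓ).card ≤ Nat.card (𝓞 K ⧸ 𝔟 ℓ) := by
    rw [Nat.card_eq_fintype_card]
    exact Finset.card_le_univ _
  have hcompl : ((B ℓ)ᶜ.card : ℝ) = (Nat.card (𝓞 K ⧸ 𝔟 ℓ) : ℝ) - (B ℓ).card := by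
    rw [Finset.card_compl, ← Nat.card_eq_fintype_card, Nat.cast_sub hle]
  rw [ENNReal.toReal_mul, ENNReal.toReal_inv, ENNReal.toReal_natCast,
    ENNReal.toReal_natCast, hD, hcompl]
  have hNne : (Nat.card (𝓞 K ⧸ 𝔟 ℓ) : ℝ) ≠ 0 := Nat.cast_ne_zero.2 hN0.ne'
  field_simp
end

section
/- Define θ on Y := {y ∈ X_𝔅 : D(𝔟_ℓ|supp y) = N(𝔟_ℓ) − 1 for all ℓ} by θ(y) = g iff supp y ∩ (𝔟_ℓ − g_ℓ) = ∅ for each ℓ ≥ 1 (g_ℓ being the unique missing residue class mod 𝔟_ℓ). Then θ is well-defined (the missing class is unique) and equivariant: T_a ∘ θ = θ ∘ S_a for all a ∈ O_K. -/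
set_option synthInstance.maxHeartbeats 1000000
set_option maxHeartbeats 1000000

open NumberField

/-- for `y ∈ Y` (admissible configurations whose support misses exactly one
residue class mod each `𝔟_ℓ`), the map `θ` is well defined (for each `ℓ` there is a unique
`g_ℓ` with `supp y ∩ (𝔟_ℓ − g_ℓ) = ∅`, i.e. `mk b ≠ -g_ℓ` for all `b` in the support),
and `θ` is equivariant: `T_a ∘ θ = θ ∘ S_a`. -/
theorem stmt12 {K : Type*} [Field K] [NumberField K] (𝔟 : ℕ → Ideal (𝓞 K))
    [∀ ℓ, Finite (𝓞 K ⧸ 𝔟 ℓ)] :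
    (∀ y : 𝓞 K → Bool,
      (∀ ℓ, Set.ncard ((Ideal.Quotient.mk (𝔟 ℓ)) '' {b : 𝓞 K | y b = true})
          = Nat.card (𝓞 K ⧸ 𝔟 ℓ) - 1) →
      ∀ ℓ, ∃! g : 𝓞 K ⧸ 𝔟 ℓ,
        ∀ b : 𝓞 K, y b = true → Ideal.Quotient.mk (𝔟 ℓ) b ≠ -g) ∧
    (∀ (y : 𝓞 K → Bool) (a : 𝓞 K) (g : ∀ ℓ, 𝓞 K ⧸ 𝔟 ℓ),
      (∀ ℓ (b : 𝓞 K), y b = true → Ideal.Quotient.mk (𝔟 ℓ) b ≠ -(g ℓ)) →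
      ∀ ℓ (b : 𝓞 K), y (b + a) = true →
        Ideal.Quotient.mk (𝔟 ℓ) b ≠ -(g ℓ + Ideal.Quotient.mk (𝔟 ℓ) a)) := by
  constructor
  · intro y hy ℓ
    set S : Set (𝓞 K ⧸ 𝔟 ℓ) := (Ideal.Quotient.mk (𝔟 ℓ)) '' {b : 𝓞 K | y b = true} with hS
    have hfin : (Set.univ : Set (𝓞 K ⧸ 𝔟 ℓ)).Finite := Set.finite_univ
    have hScard : S.ncard = Nat.card (𝓞 K ⧸ 𝔟 ℓ) - 1 := hy ℓ
    have hpos : 0 < Nat.card (𝓞 K ⧸ 𝔟 ℓ) := Nat.card_pos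
    have hcompl : Sᶜ.ncard = 1 := by
      have h := Set.ncard_add_ncard_compl S
      have huniv : (Set.univ : Set (𝓞 K ⧸ 𝔟 ℓ)).ncard = Nat.card (𝓞 K ⧸ 𝔟 ℓ) :=
        Set.ncard_univ _
      omega
    obtain ⟨x, hx⟩ := Set.ncard_eq_one.mp hcompl
    refine ⟨-x, ?_, ?_⟩
    · intro b hb hbx
      have : Ideal.Quotient.mk (𝔟 ℓ) b ∈ S := ⟨b, hb, rfl⟩
      rw [hbx, neg_neg] at this
      have : x ∈ Sᶜ := by rw [hx]; rfl
      rw [hbx, neg_neg] at *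
      exact this ‹x ∈ S›
    · intro g hg
      have : -g ∈ Sᶜ := by
        intro h
        obtain ⟨b, hb, hbe⟩ := h
        exact hg b hb (by rw [hbe])
      rw [hx] at this
      simp only [Set.mem_singleton_iff] at this
      rw [← neg_neg g, this]
  · intro y a g hg ℓ b hb hbe
    apply hg ℓ (b + a) hb
    rw [map_add, hbe]
    ring
end

section
/- Suppose a group 𝔾 acts by homeomorphisms (T_g) on a compact metric space (X, d) with a fixed point x₀ (T_g x₀ = x₀ for all g). If for every x ∈ X and ε > 0 the set {g ∈ 𝔾 : d(T_g x, x₀) < ε} is syndetic, then for every pair x, y ∈ X and ε > 0 the set {g : d(T_g x, T_g y) < ε} is syndetic; in particular the action is proximal: for all x, y, inf_g d(T_g x, T_g y) = 0. -/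
/-!
The diagonal action on `X × X` inherits the hypothesis: projecting the orbit closure of `(x, y)`
to the first factor is a closed map (as `X` is compact), so it contains some `(x₀, v)`; the orbit
closure of `(x₀, v)` contains `(x₀, x₀)` because `x₀` is fixed and lies in the orbit closure of
`v`. So every orbit of the diagonal action meets every ball around `(x₀, x₀)`, and by
compactness of `X × X` finitely many group elements already bring every pair into such a ball;
this finite set is the compact set witnessing syndeticity. Two points `ε/2`-close to `x₀` are
`ε`-close to each other.
-/

open Set Metric

/-- A subset `S` of a topological additive group is syndetic if `K + S = 𝔾` for some
compact `K`. -/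
def Syndetic {G : Type*} [AddCommGroup G] [TopologicalSpace G] (S : Set G) : Prop :=
  ∃ K : Set G, IsCompact K ∧ ∀ g : G, ∃ k ∈ K, ∃ s ∈ S, g = k + s

namespace Syndetic

variable {G : Type*} [AddCommGroup G] [TopologicalSpace G] {S S' : Set G}

theorem nonempty (h : Syndetic S) : S.Nonempty := by
  obtain ⟨K, -, hK⟩ := h
  obtain ⟨-, -, s, hs, -⟩ := hK 0
  exact ⟨s, hs⟩

theorem mono (h : Syndetic S) (hSS' : S ⊆ S') : Syndetic S' := by
  obtain ⟨K, hKc, hK⟩ := h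
  refine ⟨K, hKc, fun g => ?_⟩
  obtain ⟨k, hk, s, hs, rfl⟩ := hK g
  exact ⟨k, hk, s, hSS' hs, rfl⟩

theorem of_finset (F : Finset G) (hF : ∀ g, ∃ f ∈ F, f + g ∈ S) : Syndetic S := by
  refine ⟨Neg.neg '' (F : Set G), (F.finite_toSet.image _).isCompact, fun g => ?_⟩
  obtain ⟨f, hf, hfg⟩ := hF g
  exact ⟨-f, mem_image_of_mem _ hf, f + g, hfg, by abel⟩

end Syndetic

section Action

variable {G Y : Type*} [TopologicalSpace Y]

def orbitClosure (T : G → Y ≃ₜ Y) (y : Y) : Set Y :=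
  closure (range fun g => T g y)

theorem orbitClosure_subset_of_mem [Add G] {T : G → Y ≃ₜ Y}
    (hT : ∀ g h y, T (g + h) y = T g (T h y)) {p q : Y} (hq : q ∈ orbitClosure T p) :
    orbitClosure T q ⊆ orbitClosure T p := by
  refine closure_minimal ?_ isClosed_closure
  rintro - ⟨h, rfl⟩
  refine map_mem_closure (T h).continuous hq ?_
  rintro - ⟨g, rfl⟩
  exact ⟨h + g, hT h g p⟩

def prodDiag (T : G → Y ≃ₜ Y) (g : G) : Y × Y ≃ₜ Y × Y :=
  (T g).prodCongr (T g)

theorem prodDiag_add [Add G] {T : G → Y ≃ₜ Y} (hT : ∀ g h y, T (g + h) y = T g (T h y))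
    (g h : G) (p : Y × Y) : prodDiag T (g + h) p = prodDiag T g (prodDiag T h p) :=
  Prod.ext (hT g h p.1) (hT g h p.2)

theorem exists_mk_mem_orbitClosure_prodDiag [CompactSpace Y] {T : G → Y ≃ₜ Y} {x z : Y}
    (hz : z ∈ orbitClosure T x) (y : Y) : ∃ v, (z, v) ∈ orbitClosure (prodDiag T) (x, y) := by
  have hclosed : IsClosed (Prod.fst '' orbitClosure (prodDiag T) (x, y)) :=
    isClosedMap_fst_of_compactSpace _ isClosed_closure
  have hrange : range (fun g => T g x) ⊆ Prod.fst '' orbitClosure (prodDiag T) (x, y) := by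
    rintro - ⟨g, rfl⟩
    exact ⟨_, subset_closure ⟨g, rfl⟩, rfl⟩
  obtain ⟨⟨_, v⟩, hv, rfl⟩ := hclosed.closure_subset_iff.2 hrange hz
  exact ⟨v, hv⟩

theorem mem_orbitClosure_prodDiag [Add G] [CompactSpace Y] {T : G → Y ≃ₜ Y}
    (hT : ∀ g h y, T (g + h) y = T g (T h y)) {z : Y} (hfix : ∀ g, T g z = z)
    (hz : ∀ y, z ∈ orbitClosure T y) (p : Y × Y) : (z, z) ∈ orbitClosure (prodDiag T) p := by
  obtain ⟨v, hv⟩ := exists_mk_mem_orbitClosure_prodDiag (hz p.1) p.2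
  refine orbitClosure_subset_of_mem (prodDiag_add hT) hv ?_
  refine map_mem_closure (continuous_const.prodMk continuous_id) (hz v) ?_
  rintro - ⟨g, rfl⟩
  exact ⟨g, by simp [prodDiag, hfix]⟩

theorem syndetic_setOf_apply_mem [AddCommGroup G] [TopologicalSpace G] [CompactSpace Y]
    {T : G → Y ≃ₜ Y} (hT : ∀ g h y, T (g + h) y = T g (T h y)) {U : Set Y} (hU : IsOpen U)
    (hvisit : ∀ y, ∃ g, T g y ∈ U) (y : Y) : Syndetic {g | T g y ∈ U} := by
  obtain ⟨F, hF⟩ := isCompact_univ.elim_finite_subcover (fun g => T g ⁻¹' U)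
    (fun g => hU.preimage (T g).continuous) fun y _ => mem_iUnion.2 (hvisit y)
  refine Syndetic.of_finset F fun g => ?_
  obtain ⟨f, hf, hfg⟩ := mem_iUnion₂.1 (hF (mem_univ (T g y)))
  exact ⟨f, hf, by simpa [hT] using hfg⟩

end Action

theorem stmt17_general {G X : Type*} [AddCommGroup G] [TopologicalSpace G]
    [MetricSpace X] [CompactSpace X]
    (T : G → X ≃ₜ X) (hT : ∀ g h x, T (g + h) x = T g (T h x))
    (x₀ : X) (hfix : ∀ g, T g x₀ = x₀)
    (hsynd : ∀ (x : X) (ε : ℝ), 0 < ε → Syndetic {g : G | dist (T g x) x₀ < ε}) :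
    (∀ (x y : X) (ε : ℝ), 0 < ε → Syndetic {g : G | dist (T g x) (T g y) < ε}) ∧
    (∀ (x y : X) (ε : ℝ), 0 < ε → ∃ g : G, dist (T g x) (T g y) < ε) := by
  have hrec : ∀ x, x₀ ∈ orbitClosure T x := fun x =>
    mem_closure_range_iff.2 fun ε hε => by
      obtain ⟨g, hg⟩ := (hsynd x ε hε).nonempty
      exact ⟨g, by rwa [dist_comm]⟩
  have hpair : ∀ (x y : X) (ε : ℝ), 0 < ε → Syndetic {g : G | dist (T g x) (T g y) < ε} := by
    intro x y ε hε
    have hvisit (p : X × X) : ∃ g, prodDiag T g p ∈ ball (x₀, x₀) (ε / 2) := by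
      obtain ⟨-, hball, g, rfl⟩ := mem_closure_iff.1 (mem_orbitClosure_prodDiag hT hfix hrec p)
        _ isOpen_ball (mem_ball_self (half_pos hε))
      exact ⟨g, hball⟩
    refine (syndetic_setOf_apply_mem (prodDiag_add hT) isOpen_ball hvisit (x, y)).mono ?_
    intro g hg
    obtain ⟨hx, hy⟩ : T g x ∈ ball x₀ (ε / 2) ∧ T g y ∈ ball x₀ (ε / 2) := by
      rwa [← ball_prod_same] at hg
    rw [mem_ball] at hx hy
    show dist (T g x) (T g y) < ε
    linarith [dist_triangle_right (T g x) (T g y) x₀]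
  exact ⟨hpair, fun x y ε hε => (hpair x y ε hε).nonempty⟩

/-- if a group of homeomorphisms of a compact metric space has a fixed
point `x₀` and every point returns `ε`-close to `x₀` along a syndetic set, then every pair
of points comes `ε`-close along a syndetic set; in particular the action is proximal. -/
theorem stmt17 {G X : Type*} [AddCommGroup G] [TopologicalSpace G] [IsTopologicalAddGroup G]
    [LocallyCompactSpace G] [NoncompactSpace G]
    [MetricSpace X] [CompactSpace X]
    (T : G → X ≃ₜ X) (hT : ∀ g h x, T (g + h) x = T g (T h x))
    (x₀ : X) (hfix : ∀ g, T g x₀ = x₀)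
    (hsynd : ∀ (x : X) (ε : ℝ), 0 < ε → Syndetic {g : G | dist (T g x) x₀ < ε}) :
    (∀ (x y : X) (ε : ℝ), 0 < ε → Syndetic {g : G | dist (T g x) (T g y) < ε}) ∧
    (∀ (x y : X) (ε : ℝ), 0 < ε → ∃ g : G, dist (T g x) (T g y) < ε) :=
  stmt17_general T hT x₀ hfix hsynd
end
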